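/- arXiv:1409.2072 — 3 statements merged into one kernel-verified Lean document; each statement's English description precedes it below -/
import Mathlib

section
/- Let (Ω, μ) be a probability space, χ ∈ W⁺_p a Young weight, and f a bounded measurable function. If χ_k is a sequence of normalized Young weights converging uniformly on compact subsets of ℝ to χ, then ‖f‖_{χ_k,μ} → ‖f‖_{χ,μ}, where ‖f‖_{ψ,μ} = inf{ r > 0 : ∫ ψ(f/r) dμ ≤ ψ(1) }. -/
set_option linter.unusedSectionVars false
open MeasureTheory

/-- The gauge (Luxemburg) norm `‖f‖_{χ,μ} = inf{ r > 0 : ∫ χ(f/r) dμ ≤ χ(1) }`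
associated to a Young weight `χ` and a measure `μ`. -/
noncomputable def gaugeNorm {Ω : Type*} [MeasurableSpace Ω] (μ : Measure Ω)
    (χ : ℝ → ℝ) (f : Ω → ℝ) : ℝ :=
  sInf {r : ℝ | 0 < r ∧ Integrable (fun x => χ (f x / r)) μ ∧
    ∫ x, χ (f x / r) ∂μ ≤ χ 1}

open Filter

section Aux
variable {ψ : ℝ → ℝ}

lemma weight_nonneg (hconv : ConvexOn ℝ Set.univ ψ) (heven : ∀ l, ψ (-l) = ψ l)
    (h0 : ψ 0 = 0) (l : ℝ) : 0 ≤ ψ l := by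
  have h := hconv.2 (Set.mem_univ l) (Set.mem_univ (-l))
    (by norm_num : (0:ℝ) ≤ 1/2) (by norm_num : (0:ℝ) ≤ 1/2) (by norm_num)
  simp only [smul_eq_mul, heven] at h
  have : (1/2 : ℝ) * l + (1/2) * (-l) = 0 := by ring
  rw [this, h0] at h
  linarith

lemma weight_scale (hconv : ConvexOn ℝ Set.univ ψ) (h0 : ψ 0 = 0)
    {ε : ℝ} (hε0 : 0 ≤ ε) (hε1 : ε ≤ 1) (l : ℝ) : ψ (ε * l) ≤ ε * ψ l := by
  have h := hconv.2 (Set.mem_univ l) (Set.mem_univ (0:ℝ))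
    hε0 (by linarith : (0:ℝ) ≤ 1 - ε) (by ring)
  simpa [h0] using h

lemma weight_mono (hconv : ConvexOn ℝ Set.univ ψ) (heven : ∀ l, ψ (-l) = ψ l)
    (h0 : ψ 0 = 0) {a b : ℝ} (ha : 0 ≤ a) (hab : a ≤ b) : ψ a ≤ ψ b := by
  rcases eq_or_lt_of_le (ha.trans hab) with hb | hb
  · have : a = 0 := le_antisymm (hab.trans hb.symm.le) ha
    simp [this, ← hb]
  · have key : ψ ((a/b) * b) ≤ (a/b) * ψ b := weight_scale hconv h0
      (div_nonneg ha hb.le) ((div_le_one hb).2 hab) b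
    rw [div_mul_cancel₀ _ hb.ne'] at key
    have hnn := weight_nonneg hconv heven h0 b
    have : (a/b) * ψ b ≤ 1 * ψ b :=
      mul_le_mul_of_nonneg_right ((div_le_one hb).2 hab) hnn
    linarith

lemma weight_abs_mono (hconv : ConvexOn ℝ Set.univ ψ) (heven : ∀ l, ψ (-l) = ψ l)
    (h0 : ψ 0 = 0) {a b : ℝ} (hab : |a| ≤ |b|) : ψ a ≤ ψ b := by
  have ea : ψ a = ψ |a| := by rcases abs_choice a with h | h <;> simp [h, ← heven a]
  have eb : ψ b = ψ |b| := by rcases abs_choice b with h | h <;> simp [h, ← heven b]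
  rw [ea, eb]
  exact weight_mono hconv heven h0 (abs_nonneg a) hab

lemma weight_continuous (hconv : ConvexOn ℝ Set.univ ψ) : Continuous ψ := by
  rw [← continuousOn_univ]
  exact hconv.continuousOn isOpen_univ

variable {Ω : Type*} [MeasurableSpace Ω] {μ : Measure Ω} [IsProbabilityMeasure μ]
  {f : Ω → ℝ} {C : ℝ}

lemma weight_integrable (hconv : ConvexOn ℝ Set.univ ψ) (heven : ∀ l, ψ (-l) = ψ l)
    (h0 : ψ 0 = 0) (hf : Measurable f) (hC : ∀ x, |f x| ≤ C) (hC0 : 0 ≤ C)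
    {r : ℝ} (hr : 0 < r) : Integrable (fun x => ψ (f x / r)) μ := by
  have hmeas : AEStronglyMeasurable (fun x => ψ (f x / r)) μ :=
    ((weight_continuous hconv).measurable.comp (hf.div_const r)).aestronglyMeasurable
  refine (integrable_const (ψ (C / r))).mono' hmeas (Eventually.of_forall fun x => ?_)
  rw [Real.norm_eq_abs, abs_of_nonneg (weight_nonneg hconv heven h0 _)]
  apply weight_abs_mono hconv heven h0
  rw [abs_div, abs_div, abs_of_pos hr, abs_of_nonneg hC0]
  gcongr; exact hC x

/-- Pointwise bound `|f x / r| ≤ C / r`. -/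
lemma div_abs_le (hC : ∀ x, |f x| ≤ C) {r : ℝ} (hr : 0 < r) (x : Ω) :
    |f x / r| ≤ C / r := by
  rw [abs_div, abs_of_pos hr]
  gcongr; exact hC x

/-- The gauge set is upward closed. -/
lemma gaugeSet_upward (hconv : ConvexOn ℝ Set.univ ψ) (heven : ∀ l, ψ (-l) = ψ l)
    (h0 : ψ 0 = 0) (hf : Measurable f) (hC : ∀ x, |f x| ≤ C) (hC0 : 0 ≤ C)
    {s r : ℝ}
    (hs : s ∈ {r : ℝ | 0 < r ∧ Integrable (fun x => ψ (f x / r)) μ ∧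
      ∫ x, ψ (f x / r) ∂μ ≤ ψ 1}) (hsr : s ≤ r) :
    r ∈ {r : ℝ | 0 < r ∧ Integrable (fun x => ψ (f x / r)) μ ∧
      ∫ x, ψ (f x / r) ∂μ ≤ ψ 1} := by
  obtain ⟨hs0, hsint, hsle⟩ := hs
  have hr0 : 0 < r := lt_of_lt_of_le hs0 hsr
  refine ⟨hr0, weight_integrable hconv heven h0 hf hC hC0 hr0, le_trans ?_ hsle⟩
  refine integral_mono (weight_integrable hconv heven h0 hf hC hC0 hr0) hsint fun x => ?_
  apply weight_abs_mono hconv heven h0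
  rw [abs_div, abs_div, abs_of_pos hr0, abs_of_pos hs0]
  gcongr

/-- The gauge set is nonempty: `max C 1` belongs to it. -/
lemma gaugeSet_nonempty (hconv : ConvexOn ℝ Set.univ ψ) (heven : ∀ l, ψ (-l) = ψ l)
    (h0 : ψ 0 = 0) (hf : Measurable f) (hC : ∀ x, |f x| ≤ C) (hC0 : 0 ≤ C) :
    max C 1 ∈ {r : ℝ | 0 < r ∧ Integrable (fun x => ψ (f x / r)) μ ∧
      ∫ x, ψ (f x / r) ∂μ ≤ ψ 1} := by
  have hr0 : (0:ℝ) < max C 1 := lt_of_lt_of_le one_pos (le_max_right _ _)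
  refine ⟨hr0, weight_integrable hconv heven h0 hf hC hC0 hr0, ?_⟩
  have hpt : ∀ x, ψ (f x / max C 1) ≤ ψ 1 := by
    intro x
    apply weight_abs_mono hconv heven h0
    rw [abs_one]
    refine le_trans (div_abs_le hC hr0 x) ?_
    rw [div_le_one hr0]
    exact le_max_left _ _
  calc ∫ x, ψ (f x / max C 1) ∂μ ≤ ∫ _x, ψ 1 ∂μ :=
        integral_mono (weight_integrable hconv heven h0 hf hC hC0 hr0)
          (integrable_const _) hpt
    _ = ψ 1 := by simp
end Aux

/-- If `χ ∈ W⁺_p`, `f` is bounded measurable, and `χ_k` are normalized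
Young weights converging to `χ` uniformly on compact subsets of `ℝ`, then
`‖f‖_{χ_k,μ} → ‖f‖_{χ,μ}`. -/
theorem gaugeNorm_weight_approx {Ω : Type*} [MeasurableSpace Ω] (μ : Measure Ω)
    [IsProbabilityMeasure μ] (χ : ℝ → ℝ) (p : ℝ) (hp : 1 ≤ p)
    (hconv : ConvexOn ℝ Set.univ χ) (heven : ∀ l, χ (-l) = χ l) (h0 : χ 0 = 0)
    (hsub : ∀ l : ℝ, χ 1 + (l - 1) ≤ χ l) (h1 : 0 < χ 1)
    (hgrowth₁ : ∀ ε : ℝ, 0 < ε → ε < 1 → ∀ l : ℝ, 0 < l → ε ^ p * χ l ≤ χ (ε * l))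
    (hgrowth₂ : ∀ ε : ℝ, 0 < ε → ε < 1 → ∀ l : ℝ, 0 < l → χ (ε * l) ≤ ε * χ l)
    (χk : ℕ → ℝ → ℝ)
    (hkconv : ∀ k, ConvexOn ℝ Set.univ (χk k)) (hkeven : ∀ k l, χk k (-l) = χk k l)
    (hk0 : ∀ k, χk k 0 = 0) (hksub : ∀ k, ∀ l : ℝ, χk k 1 + (l - 1) ≤ χk k l)
    (hk1 : ∀ k, 0 < χk k 1)
    (hunif : ∀ K : Set ℝ, IsCompact K →
      TendstoUniformlyOn (fun k => χk k) χ atTop K)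
    (f : Ω → ℝ) (hf : Measurable f) (C : ℝ) (hC : ∀ x, |f x| ≤ C) :
    Tendsto (fun k => gaugeNorm μ (χk k) f) atTop (nhds (gaugeNorm μ χ f)) := by
  -- Ω is nonempty since μ is a probability measure, so 0 ≤ C.
  have hΩ : Nonempty Ω := by
    by_contra h
    have : (Set.univ : Set Ω) = ∅ := Set.univ_eq_empty_iff.2 (not_nonempty_iff.1 h)
    have h1' : μ Set.univ = 1 := measure_univ
    rw [this, measure_empty] at h1'
    exact zero_ne_one h1'
  have hC0 : 0 ≤ C := le_trans (abs_nonneg _) (hC hΩ.some)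
  -- notation
  set S : (ℝ → ℝ) → Set ℝ := fun ψ => {r : ℝ | 0 < r ∧
    Integrable (fun x => ψ (f x / r)) μ ∧ ∫ x, ψ (f x / r) ∂μ ≤ ψ 1} with hS
  have hbdd : ∀ ψ, BddBelow (S ψ) := fun ψ => ⟨0, fun s hs => hs.1.le⟩
  have hSne : (S χ).Nonempty := ⟨_, gaugeSet_nonempty hconv heven h0 hf hC hC0⟩
  have hSkne : ∀ k, (S (χk k)).Nonempty :=
    fun k => ⟨_, gaugeSet_nonempty (hkconv k) (hkeven k) (hk0 k) hf hC hC0⟩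
  have hNk0 : ∀ k, 0 ≤ gaugeNorm μ (χk k) f :=
    fun k => le_csInf (hSkne k) fun s hs => hs.1.le
  have hN0 : 0 ≤ gaugeNorm μ χ f := le_csInf hSne fun s hs => hs.1.le
  set N := gaugeNorm μ χ f with hNdef
  rw [tendsto_order]
  constructor
  · -- lower bound: ∀ a < N, eventually a < N_k
    intro a ha
    rcases lt_or_ge a 0 with ha0 | ha0
    · exact Eventually.of_forall fun k => lt_of_lt_of_le ha0 (hNk0 k)
    -- 0 ≤ a < N; take r between a and N
    set r := (a + N) / 2 with hr
    have hra : a < r := by simp only [hr]; linarith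
    have hrN : r < N := by simp only [hr]; linarith
    have hr0 : 0 < r := lt_of_le_of_lt ha0 hra
    have hint : Integrable (fun x => χ (f x / r)) μ :=
      weight_integrable hconv heven h0 hf hC hC0 hr0
    -- r < N = sInf S χ, so r ∉ S χ, so the integral exceeds χ 1
    have hrnot : r ∉ S χ := fun hmem => absurd (csInf_le (hbdd χ) hmem) (not_le.2 hrN)
    have hgt : χ 1 < ∫ x, χ (f x / r) ∂μ := by
      by_contra hle
      exact hrnot ⟨hr0, hint, not_lt.1 hle⟩
    set η := (∫ x, χ (f x / r) ∂μ) - χ 1 with hη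
    have hη0 : 0 < η := by simp only [hη]; linarith
    -- uniform convergence on K = [-M, M]
    set M := max (C / r) 1 with hM
    have hK : IsCompact (Set.Icc (-M) M) := isCompact_Icc
    have hev := Metric.tendstoUniformlyOn_iff.1 (hunif _ hK) (η/3) (by linarith)
    filter_upwards [hev] with k hk
    have h1K : (1:ℝ) ∈ Set.Icc (-M) M := by
      constructor
      · linarith [le_max_right (C/r) 1, le_max_left (C/r) 1,
          div_nonneg hC0 hr0.le]
      · exact le_max_right _ _
    have hfK : ∀ x, f x / r ∈ Set.Icc (-M) M := by
      intro x
      have := (div_abs_le hC hr0 x).trans (le_max_left (C/r) 1)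
      exact abs_le.1 this
    have hb1 : |χ 1 - χk k 1| < η/3 := by
      have := hk 1 h1K
      rwa [Real.dist_eq] at this
    have hbpt : ∀ x, χ (f x / r) - η/3 ≤ χk k (f x / r) := by
      intro x
      have := hk _ (hfK x)
      rw [Real.dist_eq] at this
      have := abs_lt.1 this
      linarith [this.1, this.2]
    have hkint : Integrable (fun x => χk k (f x / r)) μ :=
      weight_integrable (hkconv k) (hkeven k) (hk0 k) hf hC hC0 hr0
    have hGk : (∫ x, χ (f x / r) ∂μ) - η/3 ≤ ∫ x, χk k (f x / r) ∂μ := by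
      have : ∫ x, (χ (f x / r) - η/3) ∂μ ≤ ∫ x, χk k (f x / r) ∂μ :=
        integral_mono (hint.sub (integrable_const _)) hkint hbpt
      rwa [integral_sub hint (integrable_const _), integral_const, probReal_univ,
        smul_eq_mul, one_mul] at this
    -- hence r ∉ S (χk k) and in fact no s ≤ r is in S (χk k)
    have hknotle : ¬ (∫ x, χk k (f x / r) ∂μ ≤ χk k 1) := by
      have := abs_lt.1 hb1
      push_neg
      have : χk k 1 < χ 1 + η/3 := by linarith [this.1, this.2]
      calc χk k 1 < χ 1 + η/3 := this
        _ ≤ (∫ x, χ (f x / r) ∂μ) - η/3 - η/3 + η/3 := by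
            simp only [hη] at *; linarith
        _ ≤ ∫ x, χk k (f x / r) ∂μ := by linarith [hGk]
    refine lt_of_lt_of_le hra (le_csInf (hSkne k) fun s hs => ?_)
    by_contra hsr
    push_neg at hsr
    have : r ∈ S (χk k) := gaugeSet_upward (hkconv k) (hkeven k) (hk0 k) hf hC hC0
      hs hsr.le
    exact hknotle this.2.2
  · -- upper bound: ∀ a > N, eventually N_k < a
    intro a ha
    set r := (N + a) / 2 with hr
    set r' := (N + r) / 2 with hr'
    have hNr' : N < r' := by simp only [hr', hr]; linarith
    have hr'r : r' < r := by simp only [hr', hr]; linarith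
    have hra : r < a := by simp only [hr]; linarith
    have hr'0 : 0 < r' := lt_of_le_of_lt hN0 hNr'
    have hr0 : 0 < r := hr'0.trans hr'r
    -- r' ∈ S χ
    obtain ⟨s, hsS, hsr'⟩ := exists_lt_of_csInf_lt hSne hNr'
    have hr'S : r' ∈ S χ := gaugeSet_upward hconv heven h0 hf hC hC0 hsS hsr'.le
    -- strict bound at r: ∫ χ(f/r) ≤ (r'/r) χ 1 < χ 1
    have hint : Integrable (fun x => χ (f x / r)) μ :=
      weight_integrable hconv heven h0 hf hC hC0 hr0
    have hint' : Integrable (fun x => χ (f x / r')) μ := hr'S.2.1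
    have hpt : ∀ x, χ (f x / r) ≤ (r'/r) * χ (f x / r') := by
      intro x
      have he : f x / r = (r'/r) * (f x / r') := by
        field_simp
      rw [he]
      exact weight_scale hconv h0 (div_nonneg hr'0.le hr0.le)
        ((div_le_one hr0).2 hr'r.le) _
    have hG : ∫ x, χ (f x / r) ∂μ ≤ (r'/r) * χ 1 := by
      calc ∫ x, χ (f x / r) ∂μ ≤ ∫ x, (r'/r) * χ (f x / r') ∂μ :=
            integral_mono hint (hint'.const_mul _) hpt
        _ = (r'/r) * ∫ x, χ (f x / r') ∂μ := integral_const_mul _ _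
        _ ≤ (r'/r) * χ 1 :=
            mul_le_mul_of_nonneg_left hr'S.2.2 (div_nonneg hr'0.le hr0.le)
    have hGlt : ∫ x, χ (f x / r) ∂μ < χ 1 := by
      refine lt_of_le_of_lt hG ?_
      have : r'/r < 1 := (div_lt_one hr0).2 hr'r
      nlinarith
    set η := χ 1 - ∫ x, χ (f x / r) ∂μ with hη
    have hη0 : 0 < η := by simp only [hη]; linarith
    set M := max (C / r) 1 with hM
    have hK : IsCompact (Set.Icc (-M) M) := isCompact_Icc
    have hev := Metric.tendstoUniformlyOn_iff.1 (hunif _ hK) (η/3) (by linarith)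
    filter_upwards [hev] with k hk
    have h1K : (1:ℝ) ∈ Set.Icc (-M) M := by
      constructor
      · linarith [le_max_right (C/r) 1, div_nonneg hC0 hr0.le]
      · exact le_max_right _ _
    have hfK : ∀ x, f x / r ∈ Set.Icc (-M) M := by
      intro x
      have := (div_abs_le hC hr0 x).trans (le_max_left (C/r) 1)
      exact abs_le.1 this
    have hb1 : |χ 1 - χk k 1| < η/3 := by
      have := hk 1 h1K
      rwa [Real.dist_eq] at this
    have hbpt : ∀ x, χk k (f x / r) ≤ χ (f x / r) + η/3 := by
      intro x
      have := hk _ (hfK x)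
      rw [Real.dist_eq] at this
      have := abs_lt.1 this
      linarith [this.1, this.2]
    have hkint : Integrable (fun x => χk k (f x / r)) μ :=
      weight_integrable (hkconv k) (hkeven k) (hk0 k) hf hC hC0 hr0
    have hGk : ∫ x, χk k (f x / r) ∂μ ≤ (∫ x, χ (f x / r) ∂μ) + η/3 := by
      have : ∫ x, χk k (f x / r) ∂μ ≤ ∫ x, (χ (f x / r) + η/3) ∂μ :=
        integral_mono hkint (hint.add (integrable_const _)) hbpt
      rwa [integral_add hint (integrable_const _), integral_const, probReal_univ,
        smul_eq_mul, one_mul] at this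
    have hrSk : r ∈ S (χk k) := by
      refine ⟨hr0, hkint, ?_⟩
      have hab := abs_lt.1 hb1
      calc ∫ x, χk k (f x / r) ∂μ ≤ (∫ x, χ (f x / r) ∂μ) + η/3 := hGk
        _ = χ 1 - η + η/3 := by simp only [hη]; ring
        _ ≤ χk k 1 := by linarith [hab.1, hab.2]
    exact lt_of_le_of_lt (csInf_le (hbdd (χk k)) hrSk) hra
end

section
/- Let (Ω, μ) be a probability space and χ a finite normalized Young weight with χ strictly increasing on [0,∞). For bounded measurable f with ‖f‖_{χ,μ} = N > 0 and any ε > 0, there exists δ > 0 such that ∫ χ(f/((1+ε)N)) dμ < χ(1) − 2δ and ∫ χ(f/((1−ε)N)) dμ > χ(1) + 2δ, provided χ ∈ W⁺_p. -/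
open MeasureTheory

/-- Quantitative separation: for `χ ∈ W⁺_p`, bounded measurable `f`
with `N = ‖f‖_{χ,μ} > 0` and `0 < ε < 1`, there is `δ > 0` with
`∫ χ(f/((1+ε)N)) dμ < χ(1) − 2δ` and `χ(1) + 2δ < ∫ χ(f/((1−ε)N)) dμ`. -/
theorem gaugeNorm_separation {Ω : Type*} [MeasurableSpace Ω] (μ : Measure Ω)
    [IsProbabilityMeasure μ] (χ : ℝ → ℝ) (p : ℝ) (hp : 1 ≤ p)
    (hconv : ConvexOn ℝ Set.univ χ) (heven : ∀ l, χ (-l) = χ l) (h0 : χ 0 = 0)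
    (h1 : 0 < χ 1)
    (hgrowth₁ : ∀ ε : ℝ, 0 < ε → ε < 1 → ∀ l : ℝ, 0 < l → ε ^ p * χ l ≤ χ (ε * l))
    (hgrowth₂ : ∀ ε : ℝ, 0 < ε → ε < 1 → ∀ l : ℝ, 0 < l → χ (ε * l) ≤ ε * χ l)
    (f : Ω → ℝ) (hf : Measurable f) (C : ℝ) (hC : ∀ x, |f x| ≤ C)
    (hint : ∀ r : ℝ, 0 < r → Integrable (fun x => χ (f x / r)) μ)
    (hpos : 0 < gaugeNorm μ χ f)
    (ε : ℝ) (hε : 0 < ε) (hε1 : ε < 1) :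
    ∃ δ : ℝ, 0 < δ ∧
      ∫ x, χ (f x / ((1 + ε) * gaugeNorm μ χ f)) ∂μ < χ 1 - 2 * δ ∧
      χ 1 + 2 * δ < ∫ x, χ (f x / ((1 - ε) * gaugeNorm μ χ f)) ∂μ := by
  classical
  set S : Set ℝ := {r : ℝ | 0 < r ∧ Integrable (fun x => χ (f x / r)) μ ∧
    ∫ x, χ (f x / r) ∂μ ≤ χ 1} with hSdef
  set N : ℝ := gaugeNorm μ χ f with hNdef
  have hNS : N = sInf S := rfl
  -- χ is nondecreasing on [0, ∞)
  have hmono : ∀ a b : ℝ, 0 ≤ a → a ≤ b → χ a ≤ χ b := by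
    intro a b ha hab
    rcases eq_or_lt_of_le (ha.trans hab) with hb | hb
    · have ha0 : a = 0 := le_antisymm (hab.trans hb.symm.le) ha
      rw [ha0, ← hb]
    · set t : ℝ := (a + b) / (2 * b) with ht
      have ht0 : 0 ≤ t := by positivity
      have ht1 : 0 ≤ 1 - t := by
        rw [ht, sub_nonneg, div_le_one (by linarith)]
        linarith
      have hcomb : t * b + (1 - t) * (-b) = a := by
        field_simp [ht]
        have h2b : t * (2 * b) = a + b := by
          rw [ht]; exact div_mul_cancel₀ _ (by positivity)
        linear_combination h2b
      have := hconv.2 (Set.mem_univ b) (Set.mem_univ (-b)) ht0 ht1 (by ring)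
      simp only [smul_eq_mul] at this
      rw [hcomb] at this
      rw [heven] at this
      calc χ a ≤ t * χ b + (1 - t) * χ b := this
        _ = χ b := by ring
  have habs : ∀ y : ℝ, χ y = χ |y| := by
    intro y
    rcases abs_cases y with ⟨h, _⟩ | ⟨h, _⟩
    · rw [h]
    · rw [h, heven]
  -- key pointwise bound
  have hkey : ∀ c : ℝ, 0 < c → c < 1 → ∀ y : ℝ, χ (c * y) ≤ c * χ y := by
    intro c hc hc1 y
    rcases lt_trichotomy y 0 with hy | hy | hy
    · have h' := hgrowth₂ c hc hc1 (-y) (by linarith)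
      calc χ (c * y) = χ (-(c * y)) := (heven _).symm
        _ = χ (c * (-y)) := by ring_nf
        _ ≤ c * χ (-y) := h'
        _ = c * χ y := by rw [heven]
    · simp [hy, h0]
    · exact hgrowth₂ c hc hc1 y hy
  -- Ω nonempty, so C ≥ 0
  have hΩ : Nonempty Ω := by
    by_contra h
    have huniv : (Set.univ : Set Ω) = ∅ := by
      ext x; exact absurd ⟨x⟩ h
    have := measure_univ (μ := μ)
    rw [huniv, measure_empty] at this
    exact zero_ne_one this
  obtain ⟨x₀⟩ := hΩ
  have hC0 : 0 ≤ C := (abs_nonneg _).trans (hC x₀)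
  -- S is nonempty
  have hmem : (C + 1) ∈ S := by
    refine ⟨by linarith, hint _ (by linarith), ?_⟩
    have hb : ∀ x, χ (f x / (C + 1)) ≤ χ 1 := by
      intro x
      have h1' : |f x / (C + 1)| ≤ 1 := by
        rw [abs_div, abs_of_pos (show (0:ℝ) < C + 1 by linarith),
          div_le_one (by linarith)]
        linarith [hC x]
      rw [habs (f x / (C + 1))]
      exact hmono _ _ (abs_nonneg _) h1'
    calc ∫ x, χ (f x / (C + 1)) ∂μ ≤ ∫ _x, χ 1 ∂μ :=
          integral_mono (hint _ (by linarith)) (integrable_const _) hb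
      _ = χ 1 := by simp
  have hne : S.Nonempty := ⟨C + 1, hmem⟩
  have hbdd : BddBelow S := ⟨0, fun r hr => hr.1.le⟩
  -- second side: ∫ χ(f/((1-ε)N)) > χ 1
  have hB : χ 1 < ∫ x, χ (f x / ((1 - ε) * N)) ∂μ := by
    by_contra h
    push_neg at h
    have hmem' : (1 - ε) * N ∈ S :=
      ⟨mul_pos (by linarith) hpos, hint _ (mul_pos (by linarith) hpos), h⟩
    have := csInf_le hbdd hmem'
    rw [← hNS] at this
    nlinarith
  -- first side
  have hN1 : 0 < (1 + ε) * N := mul_pos (by linarith) hpos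
  obtain ⟨r, hrS, hrlt⟩ := exists_lt_of_csInf_lt hne
    (show sInf S < (1 + ε / 2) * N by rw [← hNS]; nlinarith)
  have hr0 : 0 < r := hrS.1
  set c : ℝ := r / ((1 + ε) * N) with hc
  have hc0 : 0 < c := div_pos hr0 hN1
  have hc1 : c < 1 := by
    rw [hc, div_lt_one hN1]
    nlinarith
  have hpt : ∀ x, χ (f x / ((1 + ε) * N)) ≤ c * χ (f x / r) := by
    intro x
    have heq : f x / ((1 + ε) * N) = c * (f x / r) := by
      rw [hc]
      field_simp
    rw [heq]
    exact hkey c hc0 hc1 _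
  have hA : ∫ x, χ (f x / ((1 + ε) * N)) ∂μ ≤ c * ∫ x, χ (f x / r) ∂μ := by
    rw [← integral_const_mul]
    exact integral_mono (hint _ hN1) ((hint r hr0).const_mul c) hpt
  have hA' : ∫ x, χ (f x / ((1 + ε) * N)) ∂μ < χ 1 := by
    have h2 : c * ∫ x, χ (f x / r) ∂μ ≤ c * χ 1 :=
      mul_le_mul_of_nonneg_left hrS.2.2 hc0.le
    nlinarith
  -- choose δ
  set A := ∫ x, χ (f x / ((1 + ε) * N)) ∂μ
  set B := ∫ x, χ (f x / ((1 - ε) * N)) ∂μ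
  have hδ : 0 < min (χ 1 - A) (B - χ 1) / 4 := by
    have := lt_min (show (0:ℝ) < χ 1 - A by linarith) (show (0:ℝ) < B - χ 1 by linarith)
    linarith
  refine ⟨min (χ 1 - A) (B - χ 1) / 4, hδ, ?_, ?_⟩
  · have := min_le_left (χ 1 - A) (B - χ 1)
    linarith
  · have := min_le_right (χ 1 - A) (B - χ 1)
    linarith
end

section
/- Let I(u,v) be defined for functions u, v in a set E by I(u,v) = ‖u−v‖_{χ,μ_u} + ‖u−v‖_{χ,μ_v} where μ_u, μ_v are probability measures depending on u,v, and suppose the abstract locality property: μ_{max(u,v)} restricted to {v > u} equals μ_v restricted to {v > u}, and μ_{max(u,v)} restricted to {v ≤ u} equals μ_u restricted to {v ≤ u}. If χ is a finite normalized Young weight, then I(u, max(u,v)) ≤ I(u,v) and I(v, max(u,v)) ≤ I(u,v), and I(u,v) ≤ 2·(I(u,max(u,v)) + I(max(u,v),v)). -/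
open MeasureTheory

lemma chi_nonneg (χ : ℝ → ℝ) (hconv : ConvexOn ℝ Set.univ χ)
    (heven : ∀ l, χ (-l) = χ l) (h0 : χ 0 = 0) (l : ℝ) : 0 ≤ χ l := by
  have h := hconv.2 (Set.mem_univ l) (Set.mem_univ (-l))
      (by norm_num : (0:ℝ) ≤ 1/2) (by norm_num : (0:ℝ) ≤ 1/2) (by norm_num)
  simp only [smul_eq_mul, heven] at h
  have : (1/2 : ℝ) * l + 1/2 * (-l) = 0 := by ring
  rw [this, h0] at h
  linarith

lemma chi_abs_mono (χ : ℝ → ℝ) (hconv : ConvexOn ℝ Set.univ χ)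
    (heven : ∀ l, χ (-l) = χ l) (h0 : χ 0 = 0) {a b : ℝ} (hab : |a| ≤ |b|) :
    χ a ≤ χ b := by
  rcases eq_or_ne b 0 with hb | hb
  · have : a = 0 := by
      have : |a| = 0 := le_antisymm (by simpa [hb] using hab) (abs_nonneg a)
      exact abs_eq_zero.mp this
    simp [this, hb]
  · set θ : ℝ := (a / b + 1) / 2 with hθdef
    have hratio : |a / b| ≤ 1 := by
      rw [abs_div]
      exact div_le_one_of_le₀ hab (abs_nonneg b)
    have h1 : -1 ≤ a / b := (abs_le.mp hratio).1
    have h2 : a / b ≤ 1 := (abs_le.mp hratio).2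
    have hθ0 : 0 ≤ θ := by rw [hθdef]; linarith
    have hθ1 : 0 ≤ 1 - θ := by rw [hθdef]; linarith
    have h := hconv.2 (Set.mem_univ b) (Set.mem_univ (-b)) hθ0 hθ1 (by ring)
    have hpt : θ • b + (1 - θ) • (-b) = a := by
      simp only [smul_eq_mul, hθdef]
      field_simp
      ring
    rw [hpt] at h
    simp only [smul_eq_mul, heven] at h
    calc χ a ≤ θ * χ b + (1 - θ) * χ b := h
    _ = χ b := by ring

lemma chi_scale (χ : ℝ → ℝ) (hconv : ConvexOn ℝ Set.univ χ) (h0 : χ 0 = 0)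
    {ε : ℝ} (hε0 : 0 ≤ ε) (hε1 : ε ≤ 1) (t : ℝ) : χ (ε * t) ≤ ε * χ t := by
  have h := hconv.2 (Set.mem_univ t) (Set.mem_univ 0) hε0
      (show (0:ℝ) ≤ 1 - ε by linarith) (by ring)
  simp only [smul_eq_mul, mul_zero, add_zero, h0] at h
  linarith

lemma chi_meas (χ : ℝ → ℝ) (hconv : ConvexOn ℝ Set.univ χ)
    (heven : ∀ l, χ (-l) = χ l) (h0 : χ 0 = 0) {Ω : Type*} [MeasurableSpace Ω]
    {f : Ω → ℝ} (hf : Measurable f) : Measurable (fun x => χ (f x)) := by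
  have hφ : Monotone (fun t : ℝ => χ (max t 0)) := by
    intro a b hab
    exact chi_abs_mono χ hconv heven h0 (by
      rw [abs_of_nonneg (le_max_right a 0), abs_of_nonneg (le_max_right b 0)]
      exact max_le_max hab le_rfl)
  have key : ∀ x, χ (f x) = (fun t : ℝ => χ (max t 0)) |f x| := by
    intro x
    simp only []
    rw [max_eq_left (abs_nonneg _)]
    rcases le_or_gt 0 (f x) with h | h
    · rw [abs_of_nonneg h]
    · rw [abs_of_neg h, heven]
  simp only [key]
  exact hφ.measurable.comp hf.abs

lemma gaugeNorm_le' {Ω : Type*} [MeasurableSpace Ω] (μ : Measure Ω) (χ : ℝ → ℝ)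
    (f : Ω → ℝ) {r : ℝ} (hr : 0 < r)
    (hi : Integrable (fun x => χ (f x / r)) μ)
    (hle : ∫ x, χ (f x / r) ∂μ ≤ χ 1) : gaugeNorm μ χ f ≤ r :=
  csInf_le ⟨0, fun _ hx => hx.1.le⟩ ⟨hr, hi, hle⟩

lemma le_gaugeNorm' {Ω : Type*} [MeasurableSpace Ω] (μ : Measure Ω) (χ : ℝ → ℝ)
    (f : Ω → ℝ) {c : ℝ}
    (hne : ∃ r, 0 < r ∧ Integrable (fun x => χ (f x / r)) μ ∧
      ∫ x, χ (f x / r) ∂μ ≤ χ 1)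
    (h : ∀ r, 0 < r → Integrable (fun x => χ (f x / r)) μ →
      (∫ x, χ (f x / r) ∂μ ≤ χ 1) → c ≤ r) : c ≤ gaugeNorm μ χ f := by
  obtain ⟨r, hr⟩ := hne
  exact le_csInf ⟨r, hr⟩ fun b hb => h b hb.1 hb.2.1 hb.2.2

lemma gaugeNorm_mono' {Ω : Type*} [MeasurableSpace Ω] (μ1 μ2 : Measure Ω)
    (χ : ℝ → ℝ) (f1 f2 : Ω → ℝ)
    (hne : ∃ r, 0 < r ∧ Integrable (fun x => χ (f2 x / r)) μ2 ∧
      ∫ x, χ (f2 x / r) ∂μ2 ≤ χ 1)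
    (h : ∀ r, 0 < r → Integrable (fun x => χ (f2 x / r)) μ2 →
      (∫ x, χ (f2 x / r) ∂μ2 ≤ χ 1) →
      Integrable (fun x => χ (f1 x / r)) μ1 ∧ ∫ x, χ (f1 x / r) ∂μ1 ≤ χ 1) :
    gaugeNorm μ1 χ f1 ≤ gaugeNorm μ2 χ f2 := by
  obtain ⟨r, hr⟩ := hne
  exact csInf_le_csInf ⟨0, fun _ hx => hx.1.le⟩ ⟨r, hr⟩
    fun b hb => ⟨hb.1, h b hb.1 hb.2.1 hb.2.2⟩

/-- Abstract max-additivity of the energy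
`I(u,v) = ‖u−v‖_{χ,μ_u} + ‖u−v‖_{χ,μ_v}` under the locality property of the
measures (`μ_{max}` agrees with `μ_v` on `{u < v}` and with `μ_u` on `{v ≤ u}`):
`I(u, max(u,v)) ≤ I(u,v)`, `I(v, max(u,v)) ≤ I(u,v)`, and
`I(u,v) ≤ 2·(I(u, max(u,v)) + I(max(u,v), v))`. -/
theorem energy_max_additivity {Ω : Type*} [MeasurableSpace Ω]
    (μu μv μm : Measure Ω) [IsProbabilityMeasure μu] [IsProbabilityMeasure μv]
    [IsProbabilityMeasure μm]
    (u v : Ω → ℝ) (hu : Measurable u) (hv : Measurable v)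
    (hloc1 : μm.restrict {x | u x < v x} = μv.restrict {x | u x < v x})
    (hloc2 : μm.restrict {x | v x ≤ u x} = μu.restrict {x | v x ≤ u x})
    (χ : ℝ → ℝ) (p : ℝ) (hp : 1 ≤ p)
    (hconv : ConvexOn ℝ Set.univ χ) (heven : ∀ l, χ (-l) = χ l) (h0 : χ 0 = 0)
    (h1 : 0 < χ 1)
    (hgrowth : ∀ ε : ℝ, 0 < ε → ε < 1 → ∀ l : ℝ, 0 < l → ε ^ p * χ l ≤ χ (ε * l))
    (hint : ∀ r : ℝ, 0 < r →
      Integrable (fun x => χ ((u x - v x) / r)) μu ∧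
      Integrable (fun x => χ ((u x - v x) / r)) μv ∧
      Integrable (fun x => χ ((u x - v x) / r)) μm) :
    (gaugeNorm μu χ (fun x => u x - max (u x) (v x)) +
        gaugeNorm μm χ (fun x => u x - max (u x) (v x)) ≤
      gaugeNorm μu χ (fun x => u x - v x) +
        gaugeNorm μv χ (fun x => u x - v x)) ∧
    (gaugeNorm μv χ (fun x => v x - max (u x) (v x)) +
        gaugeNorm μm χ (fun x => v x - max (u x) (v x)) ≤
      gaugeNorm μu χ (fun x => u x - v x) +
        gaugeNorm μv χ (fun x => u x - v x)) ∧
    (gaugeNorm μu χ (fun x => u x - v x) + gaugeNorm μv χ (fun x => u x - v x) ≤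
      2 * ((gaugeNorm μu χ (fun x => u x - max (u x) (v x)) +
          gaugeNorm μm χ (fun x => u x - max (u x) (v x))) +
        (gaugeNorm μm χ (fun x => max (u x) (v x) - v x) +
          gaugeNorm μv χ (fun x => max (u x) (v x) - v x)))) := by
  have hnn : ∀ l, 0 ≤ χ l := chi_nonneg χ hconv heven h0
  set s : Set Ω := {x | u x < v x} with hsdef
  have hs : MeasurableSet s := measurableSet_lt hu hv
  have hloc2' : μm.restrict sᶜ = μu.restrict sᶜ := by
    have hc : sᶜ = {x | v x ≤ u x} := by
      ext x; simp [hsdef, not_lt]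
    rw [hc]; exact hloc2
  set f1 : Ω → ℝ := fun x => u x - max (u x) (v x) with hf1
  set f2 : Ω → ℝ := fun x => max (u x) (v x) - v x with hf2
  have hm1 : Measurable f1 := hu.sub (hu.max hv)
  have hm2 : Measurable f2 := (hu.max hv).sub hv
  -- pointwise facts
  have hf1s : ∀ x ∈ s, f1 x = u x - v x := by
    intro x hx
    have hx' : u x < v x := hx
    simp only [hf1, max_eq_right (le_of_lt hx')]
  have hf1c : ∀ x ∈ sᶜ, f1 x = 0 := by
    intro x hx
    have hx' : ¬ u x < v x := hx
    have : v x ≤ u x := not_lt.mp hx'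
    simp only [hf1, max_eq_left this, sub_self]
  have hf2s : ∀ x ∈ s, f2 x = 0 := by
    intro x hx
    have hx' : u x < v x := hx
    simp only [hf2, max_eq_right (le_of_lt hx'), sub_self]
  have hf2c : ∀ x ∈ sᶜ, f2 x = u x - v x := by
    intro x hx
    have hx' : ¬ u x < v x := hx
    have : v x ≤ u x := not_lt.mp hx'
    simp only [hf2, max_eq_left this]
  have habs1 : ∀ x, |f1 x| ≤ |u x - v x| := by
    intro x
    rcases le_total (v x) (u x) with h | h
    · simp only [hf1, max_eq_left h, sub_self, abs_zero]
      exact abs_nonneg _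
    · simp only [hf1, max_eq_right h]
      exact le_refl _
  have habs2 : ∀ x, |f2 x| ≤ |u x - v x| := by
    intro x
    rcases le_total (v x) (u x) with h | h
    · simp only [hf2, max_eq_left h]
      exact le_refl _
    · simp only [hf2, max_eq_right h, sub_self, abs_zero]
      exact abs_nonneg _
  -- measurability / integrability transfer
  have hchi_m : ∀ {f : Ω → ℝ}, Measurable f → ∀ r : ℝ,
      Measurable (fun x => χ (f x / r)) := by
    intro f hf r
    exact chi_meas χ hconv heven h0 (hf.div_const r)
  have hdom : ∀ (f : Ω → ℝ), (∀ x, |f x| ≤ |u x - v x|) → ∀ r : ℝ, 0 < r →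
      ∀ x, χ (f x / r) ≤ χ ((u x - v x) / r) := by
    intro f hfd r hr x
    apply chi_abs_mono χ hconv heven h0
    rw [abs_div, abs_div]
    exact div_le_div_of_nonneg_right (hfd x) (abs_pos.mpr (ne_of_gt hr)).le

  have hIntf : ∀ (f : Ω → ℝ), Measurable f → (∀ x, |f x| ≤ |u x - v x|) →
      ∀ (μ' : Measure Ω) (r : ℝ), 0 < r →
      Integrable (fun x => χ ((u x - v x) / r)) μ' →
      Integrable (fun x => χ (f x / r)) μ' := by
    intro f hf hfd μ' r hr hi
    refine hi.mono ((hchi_m hf r).aestronglyMeasurable) (ae_of_all _ fun x => ?_)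
    rw [Real.norm_eq_abs, Real.norm_eq_abs, abs_of_nonneg (hnn _),
      abs_of_nonneg (hnn _)]
    exact hdom f hfd r hr x
  -- nonemptiness of admissible sets for u - v
  have hNE : ∀ (μ' : Measure Ω),
      (∀ r : ℝ, 0 < r → Integrable (fun x => χ ((u x - v x) / r)) μ') →
      ∃ r, 0 < r ∧ Integrable (fun x => χ ((u x - v x) / r)) μ' ∧
        ∫ x, χ ((u x - v x) / r) ∂μ' ≤ χ 1 := by
    intro μ' hiAll
    set C : ℝ := ∫ x, χ ((u x - v x) / 1) ∂μ' with hC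
    have hC0 : 0 ≤ C := integral_nonneg fun x => hnn _
    have hr0 : (0:ℝ) < C / χ 1 + 1 := by positivity
    set r : ℝ := C / χ 1 + 1 with hrdef
    have hr1 : 1 ≤ r := by
      rw [hrdef]
      nlinarith [div_nonneg hC0 h1.le]
    refine ⟨r, hr0, hiAll r hr0, ?_⟩
    have hptw : ∀ x, χ ((u x - v x) / r) ≤ (1 / r) * χ ((u x - v x) / 1) := by
      intro x
      have heq : (u x - v x) / r = (1 / r) * ((u x - v x) / 1) := by
        field_simp
      rw [heq]
      exact chi_scale χ hconv h0 (by positivity)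
        (by rw [div_le_one hr0]; linarith) _
    calc ∫ x, χ ((u x - v x) / r) ∂μ'
        ≤ ∫ x, (1 / r) * χ ((u x - v x) / 1) ∂μ' :=
          integral_mono (hiAll r hr0) ((hiAll 1 one_pos).const_mul _) hptw
      _ = (1 / r) * C := by rw [integral_const_mul]
      _ ≤ χ 1 := by
          rw [div_mul_eq_mul_div, one_mul, div_le_iff₀ hr0]
          have : r * χ 1 = C + χ 1 := by
            rw [hrdef]; field_simp
          nlinarith
  have hNEu := hNE μu fun r hr => (hint r hr).1
  have hNEv := hNE μv fun r hr => (hint r hr).2.1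
  -- key integral identities for μm
  have hIm1 : ∀ r : ℝ, 0 < r →
      ∫ x, χ (f1 x / r) ∂μm ≤ ∫ x, χ ((u x - v x) / r) ∂μv := by
    intro r hr
    have hi : Integrable (fun x => χ (f1 x / r)) μm :=
      hIntf f1 hm1 habs1 μm r hr (hint r hr).2.2
    have hz : ∫ x in sᶜ, χ (f1 x / r) ∂μm = 0 := by
      rw [setIntegral_congr_fun hs.compl
        (fun x hx => by rw [hf1c x hx, zero_div, h0])]
      simp
    have hsplit := integral_add_compl hs hi
    rw [← hsplit, hz, add_zero, hloc1]
    rw [setIntegral_congr_fun hs (fun x hx => by rw [hf1s x hx])]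
    exact setIntegral_le_integral (hint r hr).2.1 (ae_of_all _ fun x => hnn _)
  have hIm2 : ∀ r : ℝ, 0 < r →
      ∫ x, χ (f2 x / r) ∂μm ≤ ∫ x, χ ((u x - v x) / r) ∂μu := by
    intro r hr
    have hi : Integrable (fun x => χ (f2 x / r)) μm :=
      hIntf f2 hm2 habs2 μm r hr (hint r hr).2.2
    have hz : ∫ x in s, χ (f2 x / r) ∂μm = 0 := by
      rw [setIntegral_congr_fun hs
        (fun x hx => by rw [hf2s x hx, zero_div, h0])]
      simp
    have hsplit := integral_add_compl hs hi
    rw [← hsplit, hz, zero_add, hloc2']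
    rw [setIntegral_congr_fun hs.compl (fun x hx => by rw [hf2c x hx])]
    exact setIntegral_le_integral (hint r hr).1 (ae_of_all _ fun x => hnn _)
  -- the four admissibility transfers
  have hT1 : ∀ r : ℝ, 0 < r → Integrable (fun x => χ ((u x - v x) / r)) μu →
      (∫ x, χ ((u x - v x) / r) ∂μu ≤ χ 1) →
      Integrable (fun x => χ (f1 x / r)) μu ∧ ∫ x, χ (f1 x / r) ∂μu ≤ χ 1 := by
    intro r hr hi hle
    have hif : Integrable (fun x => χ (f1 x / r)) μu := hIntf f1 hm1 habs1 μu r hr hi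
    exact ⟨hif, le_trans (integral_mono hif hi fun x => hdom f1 habs1 r hr x) hle⟩
  have hT2 : ∀ r : ℝ, 0 < r → Integrable (fun x => χ ((u x - v x) / r)) μv →
      (∫ x, χ ((u x - v x) / r) ∂μv ≤ χ 1) →
      Integrable (fun x => χ (f1 x / r)) μm ∧ ∫ x, χ (f1 x / r) ∂μm ≤ χ 1 := by
    intro r hr hi hle
    exact ⟨hIntf f1 hm1 habs1 μm r hr (hint r hr).2.2, le_trans (hIm1 r hr) hle⟩
  have hT3 : ∀ r : ℝ, 0 < r → Integrable (fun x => χ ((u x - v x) / r)) μu →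
      (∫ x, χ ((u x - v x) / r) ∂μu ≤ χ 1) →
      Integrable (fun x => χ (f2 x / r)) μm ∧ ∫ x, χ (f2 x / r) ∂μm ≤ χ 1 := by
    intro r hr hi hle
    exact ⟨hIntf f2 hm2 habs2 μm r hr (hint r hr).2.2, le_trans (hIm2 r hr) hle⟩
  have hT4 : ∀ r : ℝ, 0 < r → Integrable (fun x => χ ((u x - v x) / r)) μv →
      (∫ x, χ ((u x - v x) / r) ∂μv ≤ χ 1) →
      Integrable (fun x => χ (f2 x / r)) μv ∧ ∫ x, χ (f2 x / r) ∂μv ≤ χ 1 := by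
    intro r hr hi hle
    have hif : Integrable (fun x => χ (f2 x / r)) μv := hIntf f2 hm2 habs2 μv r hr hi
    exact ⟨hif, le_trans (integral_mono hif hi fun x => hdom f2 habs2 r hr x) hle⟩
  -- Part 1
  have p1a : gaugeNorm μu χ f1 ≤ gaugeNorm μu χ (fun x => u x - v x) :=
    gaugeNorm_mono' μu μu χ f1 _ hNEu hT1
  have p1b : gaugeNorm μm χ f1 ≤ gaugeNorm μv χ (fun x => u x - v x) :=
    gaugeNorm_mono' μm μv χ f1 _ hNEv hT2
  -- Part 2 : rewrite v - max to max - v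
  have hgf3 : ∀ μ' : Measure Ω,
      gaugeNorm μ' χ (fun x => v x - max (u x) (v x)) = gaugeNorm μ' χ f2 := by
    intro μ'
    unfold gaugeNorm
    congr 1
    ext r
    have h : (fun x => χ ((v x - max (u x) (v x)) / r)) =
        (fun x => χ (f2 x / r)) := by
      funext x
      simp only [hf2]
      rw [show (v x - max (u x) (v x)) / r =
        -((max (u x) (v x) - v x) / r) by ring, heven]
    simp only [Set.mem_setOf_eq, h]
  have p2a : gaugeNorm μv χ f2 ≤ gaugeNorm μv χ (fun x => u x - v x) :=
    gaugeNorm_mono' μv μv χ f2 _ hNEv hT4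
  have p2b : gaugeNorm μm χ f2 ≤ gaugeNorm μu χ (fun x => u x - v x) :=
    gaugeNorm_mono' μm μu χ f2 _ hNEu hT3
  -- Part 3
  -- per-term scaling bound
  have hterm : ∀ (g : Ω → ℝ), Measurable g → (∀ x, |g x| ≤ |u x - v x|) →
      ∀ (μ' : Measure Ω) (a r : ℝ), 0 < a → a ≤ r → 0 < r →
      Integrable (fun x => χ (g x / a)) μ' →
      (∫ x, χ (g x / a) ∂μ' ≤ χ 1) →
      Integrable (fun x => χ ((u x - v x) / r)) μ' →
      ∫ x, χ (g x / r) ∂μ' ≤ (a / r) * χ 1 := by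
    intro g hg hgd μ' a r ha har hr hia hIa hiuv
    have hε0 : 0 ≤ a / r := le_of_lt (div_pos ha hr)
    have hε1 : a / r ≤ 1 := (div_le_one hr).mpr har
    have hpt : ∀ x, χ (g x / r) ≤ (a / r) * χ (g x / a) := by
      intro x
      have heq : g x / r = (a / r) * (g x / a) := by
        field_simp
      rw [heq]
      exact chi_scale χ hconv h0 hε0 hε1 _
    calc ∫ x, χ (g x / r) ∂μ'
        ≤ ∫ x, (a / r) * χ (g x / a) ∂μ' :=
          integral_mono (hIntf g hg hgd μ' r hr hiuv) (hia.const_mul _) hpt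
      _ = (a / r) * ∫ x, χ (g x / a) ∂μ' := integral_const_mul _ _
      _ ≤ (a / r) * χ 1 := mul_le_mul_of_nonneg_left hIa hε0
  -- nonemptiness of the four target sets
  have hNE1 : ∃ r, 0 < r ∧ Integrable (fun x => χ (f1 x / r)) μu ∧
      ∫ x, χ (f1 x / r) ∂μu ≤ χ 1 := by
    obtain ⟨r, hr, hi, hle⟩ := hNEu
    exact ⟨r, hr, (hT1 r hr hi hle).1, (hT1 r hr hi hle).2⟩
  have hNE2 : ∃ r, 0 < r ∧ Integrable (fun x => χ (f1 x / r)) μm ∧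
      ∫ x, χ (f1 x / r) ∂μm ≤ χ 1 := by
    obtain ⟨r, hr, hi, hle⟩ := hNEv
    exact ⟨r, hr, (hT2 r hr hi hle).1, (hT2 r hr hi hle).2⟩
  have hNE3 : ∃ r, 0 < r ∧ Integrable (fun x => χ (f2 x / r)) μm ∧
      ∫ x, χ (f2 x / r) ∂μm ≤ χ 1 := by
    obtain ⟨r, hr, hi, hle⟩ := hNEu
    exact ⟨r, hr, (hT3 r hr hi hle).1, (hT3 r hr hi hle).2⟩
  have hNE4 : ∃ r, 0 < r ∧ Integrable (fun x => χ (f2 x / r)) μv ∧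
      ∫ x, χ (f2 x / r) ∂μv ≤ χ 1 := by
    obtain ⟨r, hr, hi, hle⟩ := hNEv
    exact ⟨r, hr, (hT4 r hr hi hle).1, (hT4 r hr hi hle).2⟩
  -- splitting bounds
  have hsplit_u : ∀ r : ℝ, 0 < r →
      ∫ x, χ ((u x - v x) / r) ∂μu ≤
        ∫ x, χ (f1 x / r) ∂μu + ∫ x, χ (f2 x / r) ∂μm := by
    intro r hr
    have hi := (hint r hr).1
    rw [← integral_add_compl hs hi]
    have t1 : ∫ x in s, χ ((u x - v x) / r) ∂μu ≤ ∫ x, χ (f1 x / r) ∂μu := by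
      rw [setIntegral_congr_fun hs (fun x hx => by rw [← hf1s x hx])]
      exact setIntegral_le_integral (hIntf f1 hm1 habs1 μu r hr hi)
        (ae_of_all _ fun x => hnn _)
    have t2 : ∫ x in sᶜ, χ ((u x - v x) / r) ∂μu ≤ ∫ x, χ (f2 x / r) ∂μm := by
      rw [setIntegral_congr_fun hs.compl (fun x hx => by rw [← hf2c x hx]),
        ← hloc2']
      exact setIntegral_le_integral (hIntf f2 hm2 habs2 μm r hr (hint r hr).2.2)
        (ae_of_all _ fun x => hnn _)
    exact add_le_add t1 t2
  have hsplit_v : ∀ r : ℝ, 0 < r →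
      ∫ x, χ ((u x - v x) / r) ∂μv ≤
        ∫ x, χ (f1 x / r) ∂μm + ∫ x, χ (f2 x / r) ∂μv := by
    intro r hr
    have hi := (hint r hr).2.1
    rw [← integral_add_compl hs hi]
    have t1 : ∫ x in s, χ ((u x - v x) / r) ∂μv ≤ ∫ x, χ (f1 x / r) ∂μm := by
      rw [setIntegral_congr_fun hs (fun x hx => by rw [← hf1s x hx]), ← hloc1]
      exact setIntegral_le_integral (hIntf f1 hm1 habs1 μm r hr (hint r hr).2.2)
        (ae_of_all _ fun x => hnn _)
    have t2 : ∫ x in sᶜ, χ ((u x - v x) / r) ∂μv ≤ ∫ x, χ (f2 x / r) ∂μv := by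
      rw [setIntegral_congr_fun hs.compl (fun x hx => by rw [← hf2c x hx])]
      exact setIntegral_le_integral (hIntf f2 hm2 habs2 μv r hr hi)
        (ae_of_all _ fun x => hnn _)
    exact add_le_add t1 t2
  -- the two halves of part 3
  have key : ∀ (μ' : Measure Ω) (μ1 μ2 : Measure Ω) (g1 g2 : Ω → ℝ),
      Measurable g1 → Measurable g2 →
      (∀ x, |g1 x| ≤ |u x - v x|) → (∀ x, |g2 x| ≤ |u x - v x|) →
      Integrable (fun x => χ ((u x - v x) / 1)) μ' →
      (∀ r : ℝ, 0 < r → Integrable (fun x => χ ((u x - v x) / r)) μ') →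
      (∀ r : ℝ, 0 < r → Integrable (fun x => χ ((u x - v x) / r)) μ1) →
      (∀ r : ℝ, 0 < r → Integrable (fun x => χ ((u x - v x) / r)) μ2) →
      (∀ r : ℝ, 0 < r → ∫ x, χ ((u x - v x) / r) ∂μ' ≤
        ∫ x, χ (g1 x / r) ∂μ1 + ∫ x, χ (g2 x / r) ∂μ2) →
      ∀ a b : ℝ, 0 < a → 0 < b →
      Integrable (fun x => χ (g1 x / a)) μ1 → (∫ x, χ (g1 x / a) ∂μ1 ≤ χ 1) →
      Integrable (fun x => χ (g2 x / b)) μ2 → (∫ x, χ (g2 x / b) ∂μ2 ≤ χ 1) →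
      gaugeNorm μ' χ (fun x => u x - v x) ≤ 2 * (a + b) := by
    intro μ' μ1 μ2 g1 g2 hg1 hg2 hgd1 hgd2 _ hiAll hiAll1 hiAll2 hsplit
      a b ha hb hia hIa hib hIb
    have hr : (0:ℝ) < 2 * (a + b) := by linarith
    apply gaugeNorm_le' μ' χ _ hr (hiAll _ hr)
    have b1 : ∫ x, χ (g1 x / (2 * (a + b))) ∂μ1 ≤ (a / (2 * (a + b))) * χ 1 :=
      hterm g1 hg1 hgd1 μ1 a (2 * (a + b)) ha (by linarith) hr hia hIa
        (hiAll1 _ hr)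
    have b2 : ∫ x, χ (g2 x / (2 * (a + b))) ∂μ2 ≤ (b / (2 * (a + b))) * χ 1 :=
      hterm g2 hg2 hgd2 μ2 b (2 * (a + b)) hb (by linarith) hr hib hIb
        (hiAll2 _ hr)
    have hsum : (a / (2 * (a + b))) * χ 1 + (b / (2 * (a + b))) * χ 1 =
        (1 / 2) * χ 1 := by
      have hab : a + b ≠ 0 := by positivity
      field_simp
    calc ∫ x, χ ((u x - v x) / (2 * (a + b))) ∂μ'
        ≤ ∫ x, χ (g1 x / (2 * (a + b))) ∂μ1 +
          ∫ x, χ (g2 x / (2 * (a + b))) ∂μ2 := hsplit _ hr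
      _ ≤ (a / (2 * (a + b))) * χ 1 + (b / (2 * (a + b))) * χ 1 :=
          add_le_add b1 b2
      _ = (1 / 2) * χ 1 := hsum
      _ ≤ χ 1 := by linarith
  have h3u : gaugeNorm μu χ (fun x => u x - v x) ≤
      2 * gaugeNorm μu χ f1 + 2 * gaugeNorm μm χ f2 := by
    have step1 : ∀ b : ℝ, 0 < b → Integrable (fun x => χ (f2 x / b)) μm →
        (∫ x, χ (f2 x / b) ∂μm ≤ χ 1) →
        gaugeNorm μu χ (fun x => u x - v x) ≤ 2 * gaugeNorm μu χ f1 + 2 * b := by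
      intro b hb hib hIb
      have h2 : (gaugeNorm μu χ (fun x => u x - v x) - 2 * b) / 2 ≤
          gaugeNorm μu χ f1 := by
        apply le_gaugeNorm' μu χ f1 hNE1
        intro a ha hia hIa
        have := key μu μu μm f1 f2 hm1 hm2 habs1 habs2 ((hint 1 one_pos).1)
          (fun r hr => (hint r hr).1) (fun r hr => (hint r hr).1)
          (fun r hr => (hint r hr).2.2) hsplit_u a b ha hb hia hIa hib hIb
        linarith
      linarith
    have h2 : (gaugeNorm μu χ (fun x => u x - v x) -
        2 * gaugeNorm μu χ f1) / 2 ≤ gaugeNorm μm χ f2 := by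
      apply le_gaugeNorm' μm χ f2 hNE3
      intro b hb hib hIb
      have := step1 b hb hib hIb
      linarith
    linarith
  have h3v : gaugeNorm μv χ (fun x => u x - v x) ≤
      2 * gaugeNorm μm χ f1 + 2 * gaugeNorm μv χ f2 := by
    have step1 : ∀ b : ℝ, 0 < b → Integrable (fun x => χ (f2 x / b)) μv →
        (∫ x, χ (f2 x / b) ∂μv ≤ χ 1) →
        gaugeNorm μv χ (fun x => u x - v x) ≤ 2 * gaugeNorm μm χ f1 + 2 * b := by
      intro b hb hib hIb
      have h2 : (gaugeNorm μv χ (fun x => u x - v x) - 2 * b) / 2 ≤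
          gaugeNorm μm χ f1 := by
        apply le_gaugeNorm' μm χ f1 hNE2
        intro a ha hia hIa
        have := key μv μm μv f1 f2 hm1 hm2 habs1 habs2 ((hint 1 one_pos).2.1)
          (fun r hr => (hint r hr).2.1) (fun r hr => (hint r hr).2.2)
          (fun r hr => (hint r hr).2.1) hsplit_v a b ha hb hia hIa hib hIb
        linarith
      linarith
    have h2 : (gaugeNorm μv χ (fun x => u x - v x) -
        2 * gaugeNorm μm χ f1) / 2 ≤ gaugeNorm μv χ f2 := by
      apply le_gaugeNorm' μv χ f2 hNE4
      intro b hb hib hIb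
      have := step1 b hb hib hIb
      linarith
    linarith
  refine ⟨add_le_add p1a p1b, ?_, ?_⟩
  · rw [hgf3 μv, hgf3 μm]
    linarith
  · linarith
end
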